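/- Let σ: ℕ → ℕ be a bijection and let T = T_σ be the associated permutation operator. If some equivalence class [m] is infinite, then P(T) is contained in the closed linear span of {e_n : n ∉ [m]}; equivalently, every x ∈ P(T) satisfies ⟨x, e_k⟩ = 0 for all k ∈ [m]. -/

import Mathlib

/-!
A periodic point `x` with `T^j x = x` has coordinates `e.repr x` invariant under `σ^j`, since
`T` shifts coordinates along `σ`. On an infinite orbit no point is periodic for `σ`, hence none is
periodic for `σ^j`, so `e.repr x` is constant along the infinitely many distinct indices
`(σ^j)^t k`. As an `ℓ²` sequence it tends to `0` along the cofinite filter, so that constant is `0`.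
-/

/-- The orbit `[n] = {σ^k n : k ∈ ℤ}` of `n` under the bijection `σ : ℕ → ℕ`. -/
def permOrbit (σ : Equiv.Perm ℕ) (n : ℕ) : Set ℕ := {m : ℕ | ∃ z : ℤ, (σ ^ z) n = m}

open Filter Topology Function

theorem Memℓp.tendsto_cofinite_zero {ι : Type*} {E : ι → Type*} [∀ i, NormedAddCommGroup (E i)]
    {p : ENNReal} {f : ∀ i, E i} (hf : Memℓp f p) (hp : 0 < p.toReal) :
    Tendsto (fun i => ‖f i‖) cofinite (𝓝 0) := by
  have h := (hf.summable hp).tendsto_cofinite_zero.rpow_const (p := p.toReal⁻¹)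
    (Or.inr (by positivity))
  rw [Real.zero_rpow (inv_ne_zero hp.ne')] at h
  refine h.congr fun i => ?_
  rw [← Real.rpow_mul (norm_nonneg _), mul_inv_cancel₀ hp.ne', Real.rpow_one]

section HilbertBasis

variable {ι 𝕜 E : Type*} [RCLike 𝕜] [NormedAddCommGroup E] [InnerProductSpace 𝕜 E]
  (e : HilbertBasis ι 𝕜 E)

theorem HilbertBasis.tendsto_repr_cofinite (x : E) : Tendsto (e.repr x) cofinite (𝓝 0) :=
  tendsto_zero_iff_norm_tendsto_zero.mpr <|
    (lp.memℓp (e.repr x)).tendsto_cofinite_zero (by norm_num)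

variable {σ : ι → ι} (hσ : Injective σ) {T : E →L[𝕜] E} (hT : ∀ i, T (e i) = e (σ i))
include hσ hT

theorem HilbertBasis.repr_map_apply (x : E) (i : ι) : e.repr (T x) (σ i) = e.repr x i := by
  have hdense : Dense (Submodule.span 𝕜 (Set.range e) : Set E) := by
    rw [Submodule.dense_iff_topologicalClosure_eq_top]
    exact e.dense_span
  have h : (innerSL 𝕜 (e (σ i))).comp T = innerSL 𝕜 (e i) := by
    refine ContinuousLinearMap.ext_on hdense ?_
    rintro _ ⟨l, rfl⟩
    classical
    simp only [ContinuousLinearMap.comp_apply, innerSL_apply_apply, hT]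
    rw [orthonormal_iff_ite.mp e.orthonormal, orthonormal_iff_ite.mp e.orthonormal, hσ.eq_iff]
  simpa [HilbertBasis.repr_apply_apply] using DFunLike.congr_fun h x

theorem HilbertBasis.repr_pow_map_apply (n : ℕ) (x : E) (i : ι) :
    e.repr ((T ^ n) x) (σ^[n] i) = e.repr x i := by
  induction n generalizing x i with
  | zero => simp
  | succ n ih => rw [pow_succ, mul_apply_eq_comp, iterate_succ_apply, ih, e.repr_map_apply hσ hT]

end HilbertBasis

theorem Equiv.Perm.injective_zpow_apply_of_minimalPeriod_eq_zero {α : Type*} {σ : Equiv.Perm α}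
    {k : α} (hk : minimalPeriod σ k = 0) : Injective fun z : ℤ => (σ ^ z) k := by
  intro a b hab
  have h : (σ ^ (a - b)) • k = k := (σ ^ b).injective <| by
    rw [Equiv.Perm.smul_def, ← Equiv.Perm.mul_apply, ← zpow_add, add_sub_cancel]
    exact hab
  rw [MulAction.zpow_smul_eq_iff_minimalPeriod_dvd] at h
  change (minimalPeriod σ k : ℤ) ∣ a - b at h
  rwa [hk, Nat.cast_zero, zero_dvd_iff, sub_eq_zero] at h

theorem apply_eq_of_tendsto_cofinite_of_comp_perm_eq {ι M : Type*} [TopologicalSpace M]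
    [T2Space M] {f : ι → M} {a : M} (hf : Tendsto f cofinite (𝓝 a)) {τ : Equiv.Perm ι}
    (hτ : f ∘ τ = f) {k : ι} (hk : minimalPeriod τ k = 0) : f k = a := by
  have hinj : Injective fun n : ℕ => (τ ^ n) k := by
    simpa [comp_def] using
      (Equiv.Perm.injective_zpow_apply_of_minimalPeriod_eq_zero hk).comp Nat.cast_injective
  have hconst : ∀ n : ℕ, f ((τ ^ n) k) = f k := fun n => by
    rw [Equiv.Perm.coe_pow]
    exact congrFun (iterate_invariant hτ n) k
  have h := hf.comp hinj.tendsto_cofinite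
  simp only [comp_def, hconst] at h
  exact tendsto_const_nhds_iff.mp h

theorem permOrbit_eq_orbit_zpowers (σ : Equiv.Perm ℕ) (n : ℕ) :
    permOrbit σ n = MulAction.orbit (Subgroup.zpowers σ) n := by
  ext k
  simp only [permOrbit, Set.mem_ofPred_eq, MulAction.mem_orbit_iff, Subgroup.exists_zpowers]
  rfl

theorem minimalPeriod_eq_zero_of_infinite_permOrbit {σ : Equiv.Perm ℕ} {m k : ℕ}
    (hm : (permOrbit σ m).Infinite) (hk : k ∈ permOrbit σ m) : minimalPeriod σ k = 0 := by
  rw [permOrbit_eq_orbit_zpowers] at hm hk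
  rw [← MulAction.orbit_eq_iff.mpr hk] at hm
  by_contra hp
  have : NeZero (minimalPeriod (σ • ·) k) := ⟨hp⟩
  exact hm (Set.finite_coe_iff.mp (Finite.of_equiv _ (MulAction.orbitZPowersEquiv σ k).symm))

theorem permutation_periodic_points_vanish_on_infinite_orbit_general
    {H : Type*} [NormedAddCommGroup H] [InnerProductSpace ℂ H]
    (e : HilbertBasis ℕ ℂ H) (σ : Equiv.Perm ℕ) (T : H →L[ℂ] H)
    (hT : ∀ n, T (e n) = e (σ n))
    (m : ℕ) (hm : (permOrbit σ m).Infinite) :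
    ∀ x : H, (∃ j : ℕ, 0 < j ∧ (T ^ j) x = x) →
      ∀ k ∈ permOrbit σ m, e.repr x k = 0 := by
  rintro x ⟨j, hj, hx⟩ k hk
  have hinv : e.repr x ∘ ⇑(σ ^ j) = e.repr x := funext fun n => by
    simpa [hx, ← Equiv.Perm.coe_pow] using e.repr_pow_map_apply σ.injective hT j x n
  have hk : minimalPeriod ⇑(σ ^ j) k = 0 := by
    rw [Equiv.Perm.coe_pow, minimalPeriod_iterate_eq_div_gcd hj.ne',
      minimalPeriod_eq_zero_of_infinite_permOrbit hm hk, Nat.zero_div]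
  exact apply_eq_of_tendsto_cofinite_of_comp_perm_eq (e.tendsto_repr_cofinite x) hinv hk

/-- For a permutation operator `T e_n = e_{σ n}`, if the orbit of `m` under `σ` is infinite,
then every periodic point of `T` has vanishing coordinates along that orbit, i.e. the
periodic points lie in the closed linear span of `{e_n : n ∉ [m]}`. -/
theorem permutation_periodic_points_vanish_on_infinite_orbit
    {H : Type*} [NormedAddCommGroup H] [InnerProductSpace ℂ H] [CompleteSpace H]
    (e : HilbertBasis ℕ ℂ H) (σ : Equiv.Perm ℕ) (T : H →L[ℂ] H)
    (hT : ∀ n, T (e n) = e (σ n))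
    (m : ℕ) (hm : (permOrbit σ m).Infinite) :
    ∀ x : H, (∃ j : ℕ, 0 < j ∧ (T ^ j) x = x) →
      ∀ k ∈ permOrbit σ m, e.repr x k = 0 :=
  permutation_periodic_points_vanish_on_infinite_orbit_general e σ T hT m hm
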